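/- For all ω > 0 and η > 0, the Shiha hazard rate tends to ω at infinity: lim_{y → ∞} h(y; ω, η) = ω. -/

import Mathlib

open Real Filter Topology

noncomputable def shihaHazard (ω η y : ℝ) : ℝ :=
  ω * (ω + (2 * η + 8 * ω * η * y) * Real.exp (-ω * y))
    / (ω + (3 * η + 4 * ω * η * y) * Real.exp (-ω * y))

/-! Both correction terms `(c + d y) e^{-ωy}` vanish at infinity, since exponential decay beats
linear growth; the hazard therefore tends to `ω · ω / ω = ω`. -/

lemma tendsto_affine_mul_exp_neg_mul_atTop (c d : ℝ) {b : ℝ} (hb : 0 < b) :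
    Tendsto (fun y : ℝ => (c + d * y) * exp (-b * y)) atTop (𝓝 0) := by
  have h0 := tendsto_rpow_mul_exp_neg_mul_atTop_nhds_zero 0 b hb
  have h1 := tendsto_rpow_mul_exp_neg_mul_atTop_nhds_zero 1 b hb
  simpa [add_mul, mul_assoc] using (h0.const_mul c).add (h1.const_mul d)

lemma tendsto_add_affine_mul_exp_neg_mul_atTop (a c d : ℝ) {b : ℝ} (hb : 0 < b) :
    Tendsto (fun y : ℝ => a + (c + d * y) * exp (-b * y)) atTop (𝓝 a) := by
  simpa using tendsto_const_nhds.add (tendsto_affine_mul_exp_neg_mul_atTop c d hb)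

theorem shiha_hazard_limit_at_infinity_general (ω η : ℝ) (hω : 0 < ω) :
    Filter.Tendsto (shihaHazard ω η) Filter.atTop (nhds ω) := by
  have hnum := (tendsto_add_affine_mul_exp_neg_mul_atTop ω (2 * η) (8 * ω * η) hω).const_mul ω
  have hden := tendsto_add_affine_mul_exp_neg_mul_atTop ω (3 * η) (4 * ω * η) hω
  have h := hnum.div hden hω.ne'
  rwa [mul_div_cancel_right₀ ω hω.ne'] at h

theorem shiha_hazard_limit_at_infinity (ω η : ℝ) (hω : 0 < ω) (hη : 0 < η) :
    Filter.Tendsto (shihaHazard ω η) Filter.atTop (nhds ω) :=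
  shiha_hazard_limit_at_infinity_general ω η hω
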